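/- If f is a threshold function on {0,1}^n and θ ∈ R^q, then the function g on {0,1}^{n+q} defined by g(x ⊕ y) = f(x) if y = θ and g(x ⊕ y) = 0 otherwise, is a threshold function on {0,1}^{n+q}. -/
import Mathlib


/-- The dot product on `Fin n → ℝ`. -/
noncomputable def dot {n : ℕ} (a x : Fin n → ℝ) : ℝ := ∑ i, a i * x i

/-- The Boolean cube `{0,1}^n` viewed inside `ℝ^n`. -/
def cube (n : ℕ) : Set (Fin n → ℝ) := {x | ∀ i, x i = 0 ∨ x i = 1}

lemma dot_append {n q : ℕ} (a : Fin n → ℝ) (c : Fin q → ℝ)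
    (x : Fin n → ℝ) (y : Fin q → ℝ) :
    dot (Fin.append a c) (Fin.append x y) = dot a x + dot c y := by
  simp [dot, Fin.sum_univ_add, Fin.append_left, Fin.append_right]

lemma dot_abs_le {n : ℕ} (a : Fin n → ℝ) (x : Fin n → ℝ) (hx : x ∈ cube n) :
    dot a x ≤ ∑ i, |a i| := by
  refine Finset.sum_le_sum fun i _ => ?_
  rcases hx i with h | h <;> simp [h, abs_nonneg, le_abs_self]

/-- Adding a clause: if `f` is a threshold function on `{0,1}^n` and `θ ∈ ℝ^q`, then
`g(x ⊕ y) = f(x) ∧ (y = θ)` is a threshold function on `{0,1}^{n+q}`. -/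
theorem stmt16 (n q : ℕ) (f : (Fin n → ℝ) → Bool)
    (hf : ∃ a : Fin n → ℝ, ∃ α : ℝ, ∀ x ∈ cube n, (f x = true ↔ 0 ≤ dot a x + α))
    (θ : Fin q → ℝ) :
    ∃ b : Fin (n + q) → ℝ, ∃ β : ℝ, ∀ x ∈ cube n, ∀ y ∈ cube q,
      (0 ≤ dot b (Fin.append x y) + β ↔ (f x = true ∧ y = θ)) := by
  obtain ⟨a, α, ha⟩ := hf
  by_cases hθ : θ ∈ cube q
  · -- θ has 0/1 entries; use a large penalty M
    set M : ℝ := ∑ i, |a i| + |α| + 1 with hM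
    have hMpos : 0 < M := by
      have h1 : 0 ≤ ∑ i, |a i| := Finset.sum_nonneg fun i _ => abs_nonneg _
      have h2 : 0 ≤ |α| := abs_nonneg _
      linarith
    have hbound : ∀ x ∈ cube n, dot a x + α < M := by
      intro x hx
      have := dot_abs_le a x hx
      have : α ≤ |α| := le_abs_self α
      have := dot_abs_le a x hx
      linarith [le_abs_self α]
    set c : Fin q → ℝ := fun i => M * (2 * θ i - 1) with hc
    refine ⟨Fin.append a c, α - M * ∑ i, θ i, ?_⟩
    intro x hx y hy
    rw [dot_append]
    have hsum : dot c y - M * ∑ i, θ i = ∑ i, (c i * y i - M * θ i) := by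
      simp [dot, Finset.sum_sub_distrib, Finset.mul_sum]
    -- properties of s i := c i * y i - M * θ i
    have hs_nonpos : ∀ i, c i * y i - M * θ i ≤ 0 := by
      intro i
      rcases hθ i with h | h <;> rcases hy i with h' | h' <;>
        simp [hc, h, h'] <;> nlinarith
    have hs_eq : ∀ i, y i = θ i → c i * y i - M * θ i = 0 := by
      intro i hi
      rcases hθ i with h | h <;> simp [hc, h, hi] <;> ring
    have hs_ne : ∀ i, y i ≠ θ i → c i * y i - M * θ i = -M := by
      intro i hi
      rcases hθ i with h | h <;> rcases hy i with h' | h' <;>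
        simp [h, h'] at hi ⊢ <;> simp [hc, h, h'] <;> ring
    by_cases hyθ : y = θ
    · have hzero : ∑ i, (c i * y i - M * θ i) = 0 :=
        Finset.sum_eq_zero fun i _ => hs_eq i (by rw [hyθ])
      have hdc : dot c y - M * ∑ i, θ i = 0 := by rw [hsum, hzero]
      constructor
      · intro h
        exact ⟨(ha x hx).2 (by linarith), hyθ⟩
      · intro ⟨hfx, _⟩
        have h0 := (ha x hx).1 hfx
        linarith
    · have : ∃ i, y i ≠ θ i := by
        by_contra h
        push_neg at h
        exact hyθ (funext h)
      obtain ⟨i0, hi0⟩ := this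
      have hsle : ∑ i, (c i * y i - M * θ i) ≤ -M := by
        have herase := Finset.add_sum_erase Finset.univ (fun i => c i * y i - M * θ i)
          (Finset.mem_univ i0)
        beta_reduce at herase
        have h2 : ∑ i ∈ Finset.univ.erase i0, (c i * y i - M * θ i) ≤ 0 :=
          Finset.sum_nonpos fun i _ => hs_nonpos i
        linarith [hs_ne i0 hi0]
      constructor
      · intro h
        exfalso
        have hb := hbound x hx
        have : dot a x + (dot c y + (α - M * ∑ i, θ i)) ≤ dot a x + α - M := by
          have : dot c y - M * ∑ i, θ i ≤ -M := by rw [hsum]; exact hsle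
          linarith
        linarith
      · intro ⟨_, h⟩
        exact absurd h hyθ
  · -- θ not in the cube: y = θ is impossible; take b = 0, β = -1
    refine ⟨0, -1, ?_⟩
    intro x hx y hy
    constructor
    · intro h
      exfalso
      simp [dot] at h
      linarith
    · intro ⟨_, h⟩
      exact absurd (h ▸ hy) hθ
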